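/- Let V be a finite-dimensional complex representation of S_n, and 𝟏 the trivial one-dimensional representation of S_1. With W^x as defined via the cycle-counting measure, W^x_{S_{n+1}}(Ind_{S_n}^{S_{n+1}}(V)) = x · W^x_{S_n}(V). -/
import Mathlib


/- STATEMENT 7: W^x_{S_{n+1}}(Ind_{S_n}^{S_{n+1}} V) = x·W^x_{S_n}(V), where
   S_n ⊆ S_{n+1} via S_n × S_1 and Ind is written via the standard induced
   character formula. -/

attribute [local instance] Classical.propDecidable

/-- `l(σ)`: the number of cycles of `σ`, including fixed points. -/
def cycleCount {α : Type} [Fintype α] [DecidableEq α] (σ : Equiv.Perm α) : ℕ :=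
  Fintype.card α - σ.cycleType.sum + Multiset.card σ.cycleType

/-- The standard embedding `S_k × S_m → S_{k+m}`. -/
def permSum (k m : ℕ) : Equiv.Perm (Fin k) × Equiv.Perm (Fin m) →* Equiv.Perm (Fin (k + m)) where
  toFun P := Equiv.permCongr finSumFinEquiv (Equiv.Perm.sumCongrHom (Fin k) (Fin m) P)
  map_one' := by ext x; simp
  map_mul' A B := by ext x; simp

/-- `W^x_{S_n}(ρ) = (1/dim ρ)·Σ_{σ∈S_n} χ_ρ(σ)·x^{l(σ)}`. -/
noncomputable def Wx (n : ℕ) {V : Type} [AddCommGroup V] [Module ℂ V]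
    (ρ : Representation ℂ (Equiv.Perm (Fin n)) V) (x : ℂ) : ℂ :=
  (1 / (Module.finrank ℂ V : ℂ)) *
    ∑ σ : Equiv.Perm (Fin n), LinearMap.trace ℂ V (ρ σ) * x ^ cycleCount σ

noncomputable def embEquiv (n : ℕ) : Fin n ≃ {x : Fin (n+1) // (x : ℕ) < n} where
  toFun t := ⟨t.castSucc, t.isLt⟩
  invFun x := ⟨x.1, x.2⟩
  left_inv t := by ext; simp
  right_inv x := by ext; simp

lemma permSum_eq_extendDomain (n : ℕ) (σ : Equiv.Perm (Fin n)) :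
    permSum n 1 (σ, 1) = σ.extendDomain (embEquiv n) := by
  refine Equiv.ext fun x => ?_
  by_cases h : (x : ℕ) < n
  · rw [Equiv.Perm.extendDomain_apply_subtype σ (embEquiv n) h]
    have hsym : finSumFinEquiv.symm x = Sum.inl ⟨(x:ℕ), h⟩ := by
      have hx : x = Fin.castAdd 1 ⟨(x:ℕ), h⟩ := by ext; simp
      conv_lhs => rw [hx]
      exact finSumFinEquiv_symm_apply_castAdd _
    simp [permSum, Equiv.permCongr_apply, hsym, embEquiv, Fin.ext_iff]
  · rw [Equiv.Perm.extendDomain_apply_not_subtype σ (embEquiv n) h]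
    have hn : (x:ℕ) = n := Nat.le_antisymm (Nat.lt_succ_iff.mp x.isLt) (Nat.le_of_not_lt h)
    have hsym : finSumFinEquiv.symm x = Sum.inr (0 : Fin 1) := by
      have hx : x = Fin.natAdd n (0 : Fin 1) := by ext; simpa using hn
      conv_lhs => rw [hx]
      exact finSumFinEquiv_symm_apply_natAdd _
    simp [permSum, Equiv.permCongr_apply, hsym, Fin.ext_iff, hn]

lemma cycleType_permSum (n : ℕ) (σ : Equiv.Perm (Fin n)) :
    (permSum n 1 (σ, 1)).cycleType = σ.cycleType := by
  rw [permSum_eq_extendDomain, Equiv.Perm.cycleType_extendDomain]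

lemma cycleCount_conj {α : Type} [Fintype α] [DecidableEq α] (τ σ : Equiv.Perm α) :
    cycleCount (τ * σ * τ⁻¹) = cycleCount σ := by
  unfold cycleCount; rw [Equiv.Perm.cycleType_conj]

lemma cycleCount_permSum (n : ℕ) (σ : Equiv.Perm (Fin n)) :
    cycleCount (permSum n 1 (σ, 1)) = cycleCount σ + 1 := by
  unfold cycleCount
  rw [cycleType_permSum]
  have hs : σ.cycleType.sum ≤ n := by
    rw [Equiv.Perm.sum_cycleType]
    simpa using Finset.card_le_univ σ.support
  simp only [Fintype.card_fin]
  omega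

theorem stmt7 (n : ℕ) (x : ℂ)
    {V : Type} [AddCommGroup V] [Module ℂ V] [FiniteDimensional ℂ V]
    (ρ : Representation ℂ (Equiv.Perm (Fin n)) V) :
    -- `W^x_{S_{n+1}}(Ind_{S_n}^{S_{n+1}}(V))`, where `S_n = S_n × S_1 ⊆ S_{n+1}`
    -- (`V ⊗ 𝟏` has the same character as `V`), with the induced character written
    -- via the standard induced character formula and `dim = (n+1)·dim V` ...
    (1 / (((n + 1) * Module.finrank ℂ V : ℕ) : ℂ)) *
      ∑ X : Equiv.Perm (Fin (n + 1)),
        ((1 / (n.factorial : ℂ)) *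
          ∑ Y : Equiv.Perm (Fin (n + 1)), ∑ σ : Equiv.Perm (Fin n),
            if Y * X * Y⁻¹ = permSum n 1 (σ, 1)
              then LinearMap.trace ℂ V (ρ σ) else 0) *
          x ^ cycleCount X
    -- ... equals `x · W^x_{S_n}(V)`:
    = x * Wx n ρ x := by
  set d := Module.finrank ℂ V with hd
  set χ : Equiv.Perm (Fin n) → ℂ := fun σ => LinearMap.trace ℂ V (ρ σ) with hχ
  -- step 1: rewrite whole sum
  have key : ∀ (Y : Equiv.Perm (Fin (n+1))) (σ : Equiv.Perm (Fin n)),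
      (∑ X : Equiv.Perm (Fin (n+1)),
        (if Y * X * Y⁻¹ = permSum n 1 (σ, 1) then χ σ else 0) * x ^ cycleCount X)
      = χ σ * x ^ (cycleCount σ + 1) := by
    intro Y σ
    have hcond : ∀ X : Equiv.Perm (Fin (n+1)),
        (Y * X * Y⁻¹ = permSum n 1 (σ, 1)) ↔ (X = Y⁻¹ * permSum n 1 (σ, 1) * Y) := by
      intro X
      constructor
      · intro h; rw [← h]; group
      · intro h; rw [h]; group
    have hcc : cycleCount (Y⁻¹ * permSum n 1 (σ, 1) * Y) = cycleCount σ + 1 := by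
      have : Y⁻¹ * permSum n 1 (σ, 1) * Y = Y⁻¹ * permSum n 1 (σ, 1) * (Y⁻¹)⁻¹ := by group
      rw [this, cycleCount_conj, cycleCount_permSum]
    calc (∑ X : Equiv.Perm (Fin (n+1)),
        (if Y * X * Y⁻¹ = permSum n 1 (σ, 1) then χ σ else 0) * x ^ cycleCount X)
        = ∑ X : Equiv.Perm (Fin (n+1)),
            (if X = Y⁻¹ * permSum n 1 (σ, 1) * Y then χ σ * x ^ cycleCount X else 0) := by
          refine Finset.sum_congr rfl fun X _ => ?_
          rw [ite_mul, zero_mul]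
          simp only [hcond X]
      _ = χ σ * x ^ cycleCount (Y⁻¹ * permSum n 1 (σ, 1) * Y) := by
          rw [Finset.sum_ite_eq' Finset.univ (Y⁻¹ * permSum n 1 (σ, 1) * Y)
            (fun X => χ σ * x ^ cycleCount X)]
          simp
      _ = χ σ * x ^ (cycleCount σ + 1) := by rw [hcc]
  have hsum : (∑ X : Equiv.Perm (Fin (n + 1)),
        ((1 / (n.factorial : ℂ)) *
          ∑ Y : Equiv.Perm (Fin (n + 1)), ∑ σ : Equiv.Perm (Fin n),
            if Y * X * Y⁻¹ = permSum n 1 (σ, 1) then χ σ else 0) *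
          x ^ cycleCount X)
      = (1 / (n.factorial : ℂ)) * ((n+1).factorial *
          ∑ σ : Equiv.Perm (Fin n), χ σ * x ^ (cycleCount σ + 1)) := by
    have h1 : ∀ X : Equiv.Perm (Fin (n+1)),
        ((1 / (n.factorial : ℂ)) *
          ∑ Y : Equiv.Perm (Fin (n + 1)), ∑ σ : Equiv.Perm (Fin n),
            if Y * X * Y⁻¹ = permSum n 1 (σ, 1) then χ σ else 0) * x ^ cycleCount X
        = (1 / (n.factorial : ℂ)) *
          ∑ Y : Equiv.Perm (Fin (n + 1)), ∑ σ : Equiv.Perm (Fin n),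
            (if Y * X * Y⁻¹ = permSum n 1 (σ, 1) then χ σ else 0) * x ^ cycleCount X := by
      intro X
      rw [mul_assoc, Finset.sum_mul]
      congr 1
      refine Finset.sum_congr rfl fun Y _ => ?_
      rw [Finset.sum_mul]
    simp only [h1]
    rw [← Finset.mul_sum]
    congr 1
    rw [Finset.sum_comm]
    have h2 : ∀ Y : Equiv.Perm (Fin (n+1)),
        (∑ X : Equiv.Perm (Fin (n+1)), ∑ σ : Equiv.Perm (Fin n),
          (if Y * X * Y⁻¹ = permSum n 1 (σ, 1) then χ σ else 0) * x ^ cycleCount X)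
        = ∑ σ : Equiv.Perm (Fin n), χ σ * x ^ (cycleCount σ + 1) := by
      intro Y
      rw [Finset.sum_comm]
      exact Finset.sum_congr rfl fun σ _ => key Y σ
    simp only [h2]
    rw [Finset.sum_const, Finset.card_univ, Fintype.card_perm, Fintype.card_fin,
      nsmul_eq_mul]
  rw [hsum]
  -- scalar arithmetic
  by_cases hd0 : d = 0
  · simp [Wx, hd0, ← hd]
  · have hfac : ((n+1).factorial : ℂ) = (n+1) * (n.factorial : ℂ) := by
      push_cast [Nat.factorial_succ]; ring
    have hnf : (n.factorial : ℂ) ≠ 0 := Nat.cast_ne_zero.mpr n.factorial_ne_zero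
    have hdn : (d : ℂ) ≠ 0 := Nat.cast_ne_zero.mpr hd0
    have hn1 : ((n:ℂ) + 1) ≠ 0 := by
      have h := Nat.cast_ne_zero (R := ℂ).mpr (Nat.succ_ne_zero n)
      push_cast at h
      exact h
    have hχ2 : ∀ σ, LinearMap.trace ℂ V (ρ σ) = χ σ := fun _ => rfl
    rw [Wx, ← hd]
    simp only [hχ2]
    have hpow : ∀ σ : Equiv.Perm (Fin n), χ σ * x ^ (cycleCount σ + 1)
        = x * (χ σ * x ^ cycleCount σ) := fun σ => by rw [pow_succ]; ring
    simp only [hpow]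
    rw [← Finset.mul_sum]
    push_cast [hfac]
    field_simp
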